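/- Let ε > 0. For every k ∈ ℝ² with k ≠ 0, ∫_{ℝ²} (‖y‖²/(16π)) E₁(‖y‖²/ε²) e^{−i k·y} dy = (−16 + e^{−κ²ε²/4}(16 + 4κ²ε² + κ⁴ε⁴))/(16κ⁴), where κ = ‖k‖. (This is the Fourier transform of the residual U − U^ε for the 2D biharmonic kernel U(r) = −(r²/(8π))(ln r − 1) with far-field smooth approximation U^ε(r) = −(r²/(8π))[ln r + (1/2)E₁(r²/ε²) − 1], since U − U^ε = (r²/(16π))E₁(r²/ε²).) -/

import Mathlib

open MeasureTheory Set
open scoped RealInnerProductSpace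

/-- The exponential integral `E₁(x) = ∫ₓ^∞ t⁻¹ e^{-t} dt`. -/
noncomputable def E1 (x : ℝ) : ℝ := ∫ t in Set.Ioi x, Real.exp (-t) / t

namespace FRB

open Complex Filter
open scoped Real Topology

local notation "V2" => EuclideanSpace ℝ (Fin 2)

lemma E1_eq {x : ℝ} (hx : 0 < x) :
    E1 x = ∫ s in Ioi (1:ℝ), Real.exp (-(x * s)) / s := by
  have h := MeasureTheory.integral_comp_mul_left_Ioi (fun t => Real.exp (-t) / t) 1 hx
  rw [mul_one] at h
  have h2 : ∀ s ∈ Ioi (1:ℝ), Real.exp (-(x * s)) / s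
      = x * (Real.exp (-(x * s)) / (x * s)) := by
    intro s hs
    have hs0 : (0:ℝ) < s := lt_trans one_pos hs
    field_simp
  rw [MeasureTheory.setIntegral_congr_fun measurableSet_Ioi h2,
    MeasureTheory.integral_const_mul, h, smul_eq_mul, ← mul_assoc,
    mul_inv_cancel₀ hx.ne', one_mul, E1]

lemma gauss0 {a : ℝ} (ha : 0 < a) (k : V2) :
    ∫ v : V2, cexp (-(a:ℂ) * ‖v‖^2 + (-I) * ⟪k, v⟫) =
      ((Real.pi / a * Real.exp (-‖k‖^2 / (4 * a)) : ℝ) : ℂ) := by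
  have h := GaussianFourier.integral_cexp_neg_mul_sq_norm_add
    (V := V2) (b := (a:ℂ)) (by simpa using ha) (-I) k
  rw [h]
  have hfr : (Module.finrank ℝ V2 : ℂ) / 2 = 1 := by
    rw [finrank_euclideanSpace_fin]; norm_num
  rw [show ((Module.finrank ℝ V2 : ℂ) / 2) = 1 from hfr, cpow_one]
  have harg : (-I) ^ 2 * (‖k‖:ℂ)^2 / (4 * (a:ℂ)) = ((-‖k‖^2 / (4*a) : ℝ) : ℂ) := by
    push_cast
    rw [neg_pow, I_sq]
    ring
  rw [harg, ← Complex.ofReal_exp]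
  push_cast
  ring

lemma integrable_G {a : ℝ} (ha : 0 < a) (k : V2) :
    Integrable (fun v : V2 => cexp (-(a:ℂ) * ‖v‖^2 + (-I) * ⟪k, v⟫)) := by
  exact GaussianFourier.integrable_cexp_neg_mul_sq_norm_add (by simpa using ha) (-I) k

lemma integrable_exp_gauss {a : ℝ} (ha : 0 < a) :
    Integrable (fun v : V2 => Real.exp (-a * ‖v‖^2)) := by
  have h := (integrable_G ha 0).norm
  refine h.congr (Eventually.of_forall fun v => ?_)
  simp only [Complex.norm_exp]
  congr 1
  simp only [inner_zero_left, Complex.ofReal_zero, mul_zero, add_zero,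
    ← Complex.ofReal_pow, ← Complex.ofReal_neg, ← Complex.ofReal_mul, Complex.ofReal_re]

lemma integrable_norm2_gauss {a : ℝ} (ha : 0 < a) :
    Integrable (fun v : V2 => ‖v‖^2 * Real.exp (-a * ‖v‖^2)) := by
  have ha2 : 0 < a / 2 := by linarith
  refine Integrable.mono' ((integrable_exp_gauss ha2).const_mul (2/a))
    ?_ (Eventually.of_forall fun v => ?_)
  · exact ((continuous_norm.pow 2).mul
      (Real.continuous_exp.comp (continuous_const.mul (continuous_norm.pow 2)))).aestronglyMeasurable
  · have h1 : (0:ℝ) ≤ ‖v‖^2 * Real.exp (-a * ‖v‖^2) := by positivity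
    rw [Real.norm_eq_abs, _root_.abs_of_nonneg h1]
    have hE : 0 < Real.exp (-(a/2) * ‖v‖^2) := Real.exp_pos _
    have key : ‖v‖^2 * Real.exp (-(a/2) * ‖v‖^2) ≤ 2/a := by
      have hE' : 0 < Real.exp ((a/2) * ‖v‖^2) := Real.exp_pos _
      have hprod : Real.exp (-(a/2) * ‖v‖^2) * Real.exp ((a/2) * ‖v‖^2) = 1 := by
        rw [← Real.exp_add, neg_mul, neg_add_cancel, Real.exp_zero]
      have h2 : (a/2) * ‖v‖^2 ≤ Real.exp ((a/2) * ‖v‖^2) := by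
        nlinarith [Real.add_one_le_exp ((a/2) * ‖v‖^2)]
      rw [le_div_iff₀ ha]
      nlinarith [mul_le_mul_of_nonneg_right h2 hE.le]
    have hsplit : Real.exp (-a * ‖v‖^2)
        = Real.exp (-(a/2) * ‖v‖^2) * Real.exp (-(a/2) * ‖v‖^2) := by
      rw [← Real.exp_add]; congr 1; ring
    rw [hsplit]
    nlinarith [mul_le_mul_of_nonneg_right key hE.le]


lemma re_arg (t : ℝ) (k v : V2) :
    (-(t:ℂ) * (‖v‖:ℂ)^2 + (-I) * ((⟪k, v⟫ : ℝ):ℂ)).re = -t * ‖v‖^2 := by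
  simp only [← Complex.ofReal_pow, ← Complex.ofReal_neg, ← Complex.ofReal_mul,
    Complex.add_re, Complex.ofReal_re, Complex.mul_re, Complex.neg_re, Complex.neg_im,
    Complex.I_re, Complex.I_im, Complex.ofReal_im]
  ring

lemma contF (t : ℝ) (k : V2) :
    Continuous (fun v : V2 => cexp (-(t:ℂ) * ‖v‖^2 + (-I) * ⟪k, v⟫)) := by
  apply Complex.continuous_exp.comp
  exact (continuous_const.mul ((Complex.continuous_ofReal.comp continuous_norm).pow 2)).add
    (continuous_const.mul (Complex.continuous_ofReal.comp (continuous_const.inner continuous_id)))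

set_option maxHeartbeats 1000000 in
lemma gauss2 {a : ℝ} (ha : 0 < a) (k : V2) :
    ∫ v : V2, ((‖v‖^2 : ℝ) : ℂ) * cexp (-(a:ℂ) * ‖v‖^2 + (-I) * ⟪k, v⟫)
      = (((Real.pi / a^2 - Real.pi * ‖k‖^2 / (4 * a^3))
          * Real.exp (-‖k‖^2 / (4 * a)) : ℝ) : ℂ) := by
  have ha2 : 0 < a/2 := by linarith
  set F : ℝ → V2 → ℂ := fun t v => cexp (-(t:ℂ) * ‖v‖^2 + (-I) * ⟪k, v⟫) with hFdef
  set F' : ℝ → V2 → ℂ :=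
    fun t v => -((‖v‖^2 : ℝ) : ℂ) * cexp (-(t:ℂ) * ‖v‖^2 + (-I) * ⟪k, v⟫) with hF'def
  have hnorm : ∀ (t : ℝ) (v : V2), ‖F' t v‖ = ‖v‖^2 * Real.exp (-t * ‖v‖^2) := by
    intro t v
    rw [hF'def]
    simp only [norm_mul, norm_neg, Complex.norm_real, Real.norm_eq_abs,
      _root_.abs_of_nonneg (by positivity : (0:ℝ) ≤ ‖v‖^2)]
    congr 1
    rw [Complex.norm_exp, re_arg]
  have h_bound : ∀ᵐ v : V2 ∂volume, ∀ t ∈ Metric.ball a (a/2),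
      ‖F' t v‖ ≤ ‖v‖^2 * Real.exp (-(a/2) * ‖v‖^2) := by
    refine Eventually.of_forall fun v => fun t ht => ?_
    rw [hnorm]
    have h1 : a/2 < t := by
      rw [Metric.mem_ball, Real.dist_eq, abs_lt] at ht
      linarith [ht.1]
    have : Real.exp (-t * ‖v‖^2) ≤ Real.exp (-(a/2) * ‖v‖^2) := by
      apply Real.exp_le_exp.2
      nlinarith [sq_nonneg ‖v‖]
    exact mul_le_mul_of_nonneg_left this (by positivity)
  have h_diff : ∀ᵐ v : V2 ∂volume, ∀ t ∈ Metric.ball a (a/2),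
      HasDerivAt (fun t => F t v) (F' t v) t := by
    refine Eventually.of_forall fun v => fun t _ => ?_
    have h1 : HasDerivAt (fun t : ℝ => ((t : ℝ) : ℂ)) 1 t := by
      simpa using (hasDerivAt_id t).ofReal_comp
    have h2 : HasDerivAt (fun t : ℝ => -(t:ℂ) * (‖v‖:ℂ)^2 + (-I) * ((⟪k, v⟫:ℝ):ℂ))
        (-((‖v‖^2 : ℝ) : ℂ)) t := by
      have h3 := (h1.neg.mul_const ((‖v‖:ℂ)^2)).add_const ((-I) * ((⟪k, v⟫:ℝ):ℂ))
      refine h3.congr_deriv ?_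
      push_cast
      ring
    have h4 := h2.cexp
    rw [hFdef, hF'def]
    simpa [mul_comm] using h4
  have key := hasDerivAt_integral_of_dominated_loc_of_deriv_le (μ := (volume : Measure V2))
      (F := F) (F' := F') (x₀ := a)
      (bound := fun v : V2 => ‖v‖^2 * Real.exp (-(a/2) * ‖v‖^2))
      (Metric.ball_mem_nhds a ha2)
      (Eventually.of_forall fun t => (contF t k).aestronglyMeasurable)
      (integrable_G ha k)
      (((Complex.continuous_ofReal.comp (continuous_norm.pow 2)).neg.mul
          (contF a k)).aestronglyMeasurable)
      h_bound
      (integrable_norm2_gauss ha2)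
      h_diff
  have heq : (fun t : ℝ => ∫ v : V2, F t v)
      =ᶠ[nhds a] fun t => ((Real.pi / t * Real.exp (-‖k‖^2 / (4 * t)) : ℝ) : ℂ) := by
    filter_upwards [Ioi_mem_nhds ha] with t ht
    exact gauss0 ht k
  have h5 : HasDerivAt (fun t => ((Real.pi / t * Real.exp (-‖k‖^2 / (4 * t)) : ℝ) : ℂ))
      (∫ v : V2, F' a v) a := key.2.congr_of_eventuallyEq heq.symm
  -- explicit derivative
  have hd1 : HasDerivAt (fun t : ℝ => Real.pi / t) (-Real.pi / a^2) a := by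
    have h := (hasDerivAt_inv ha.ne').const_mul Real.pi
    have hfun : (fun t : ℝ => Real.pi / t) = fun t => Real.pi * t⁻¹ := by
      funext t; rw [div_eq_mul_inv]
    rw [hfun]
    refine h.congr_deriv ?_
    field_simp
  have hd2 : HasDerivAt (fun t : ℝ => -‖k‖^2 / (4 * t)) (‖k‖^2 / (4 * a^2)) a := by
    have h := (hasDerivAt_inv ha.ne').const_mul (-‖k‖^2 / 4)
    have hfun : (fun t : ℝ => -‖k‖^2 / (4 * t)) = fun t => (-‖k‖^2 / 4) * t⁻¹ := by
      funext t; ring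
    rw [hfun]
    refine h.congr_deriv ?_
    field_simp
  have hd4 := hd1.mul hd2.exp
  have hψ : HasDerivAt (fun t => ((Real.pi / t * Real.exp (-‖k‖^2 / (4 * t)) : ℝ) : ℂ))
      (((-Real.pi / a^2 * Real.exp (-‖k‖^2 / (4 * a))
        + Real.pi / a * (Real.exp (-‖k‖^2 / (4 * a)) * (‖k‖^2 / (4 * a^2)))) : ℝ) : ℂ) a :=
    HasDerivAt.ofReal_comp hd4
  have huniq := h5.unique hψ
  have hneg : ∫ v : V2, ((‖v‖^2 : ℝ) : ℂ) * cexp (-(a:ℂ) * ‖v‖^2 + (-I) * ⟪k, v⟫)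
      = -∫ v : V2, F' a v := by
    rw [hF'def, ← integral_neg]
    congr 1
    funext v
    ring
  rw [hneg, huniq, ← Complex.ofReal_neg]
  congr 1
  field_simp
  ring


set_option maxHeartbeats 1000000 in
lemma gauss2_real {a : ℝ} (ha : 0 < a) :
    ∫ v : V2, ‖v‖^2 * Real.exp (-a * ‖v‖^2) = Real.pi / a^2 := by
  have h := gauss2 ha (0 : V2)
  have hpt : ∀ v : V2, ((‖v‖^2 * Real.exp (-a * ‖v‖^2) : ℝ) : ℂ)
      = ((‖v‖^2 : ℝ) : ℂ) * cexp (-(a:ℂ) * ‖v‖^2 + (-I) * ((⟪(0:V2), v⟫ : ℝ) : ℂ)) := by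
    intro v
    rw [inner_zero_left]
    push_cast
    rw [mul_zero, add_zero, ← Complex.ofReal_pow, ← Complex.ofReal_neg, ← Complex.ofReal_mul,
      ← Complex.ofReal_exp, ← Complex.ofReal_mul]
  rw [← Complex.ofReal_inj]
  calc ((∫ v : V2, ‖v‖^2 * Real.exp (-a * ‖v‖^2) : ℝ) : ℂ)
      = ∫ v : V2, ((‖v‖^2 * Real.exp (-a * ‖v‖^2) : ℝ) : ℂ) := integral_ofReal.symm
    _ = ∫ v : V2, ((‖v‖^2 : ℝ) : ℂ) * cexp (-(a:ℂ) * ‖v‖^2 + (-I) * ⟪(0:V2), v⟫) := by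
        exact integral_congr_ae (Eventually.of_forall hpt)
    _ = (((Real.pi / a^2 - Real.pi * ‖(0:V2)‖^2 / (4 * a^3))
          * Real.exp (-‖(0:V2)‖^2 / (4 * a)) : ℝ) : ℂ) := h
    _ = ((Real.pi / a^2 : ℝ) : ℂ) := by
        norm_num

set_option maxHeartbeats 1000000 in
lemma integral_aux {A b : ℝ} (hb : 0 < b) :
    ∫ s in Ioi (1:ℝ), (A / s^3 - A * b / s^4) * Real.exp (-b / s)
      = -A / b^2 + A * (1/b + 1 + 1/b^2) * Real.exp (-b) := by
  set Φ : ℝ → ℝ :=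
    fun s => A * (((-b⁻¹) * s⁻¹ - (s^2)⁻¹ - (b^2)⁻¹) * Real.exp ((-b) * s⁻¹)) with hΦ
  have hderiv : ∀ s ∈ Ici (1:ℝ), HasDerivAt Φ ((A / s^3 - A * b / s^4) * Real.exp (-b / s)) s := by
    intro s hs
    have hs1 : (1:ℝ) ≤ s := hs
    have hs0 : s ≠ 0 := by intro h; rw [h] at hs1; linarith
    have hsp : (0:ℝ) < s := lt_of_lt_of_le one_pos hs1
    have h1 : HasDerivAt (fun s : ℝ => (-b⁻¹) * s⁻¹) ((-b⁻¹) * (-(s^2)⁻¹)) s := by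
      simpa [mul_comm] using (hasDerivAt_inv hs0).const_mul (-b⁻¹)
    have h2 : HasDerivAt (fun s : ℝ => (s^2)⁻¹) (-(2 * s) / (s^2)^2) s := by
      simpa [Pi.inv_def] using (hasDerivAt_pow 2 s).inv (pow_ne_zero 2 hs0)
    have h3 := (h1.sub h2).sub_const ((b^2)⁻¹)
    have h4 : HasDerivAt (fun s : ℝ => Real.exp ((-b) * s⁻¹))
        (Real.exp ((-b) * s⁻¹) * ((-b) * (-(s^2)⁻¹))) s := by
      have := (hasDerivAt_inv hs0).const_mul (-b)
      simpa [mul_comm] using ((hasDerivAt_inv hs0).const_mul (-b)).exp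
    have h5 := (h3.mul h4).const_mul A
    have harg : -b / s = (-b) * s⁻¹ := by ring
    rw [harg]
    refine h5.congr_deriv ?_
    have hE := Real.exp_pos ((-b) * s⁻¹)
    simp only [Pi.sub_apply]
    field_simp
    ring
  have hfint : IntegrableOn (fun s : ℝ => (A / s^3 - A * b / s^4) * Real.exp (-b / s)) (Ioi 1) := by
    have hbase3 : IntegrableOn (fun s : ℝ => s ^ (-3 : ℝ)) (Ioi 1) :=
      integrableOn_Ioi_rpow_of_lt (by norm_num) one_pos
    have hbase4 : IntegrableOn (fun s : ℝ => s ^ (-4 : ℝ)) (Ioi 1) :=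
      integrableOn_Ioi_rpow_of_lt (by norm_num) one_pos
    refine Integrable.mono' ((hbase3.const_mul |A|).add (hbase4.const_mul (|A| * b)))
      ?_ ?_
    · apply Measurable.aestronglyMeasurable
      exact ((measurable_const.div (measurable_id.pow_const 3)).sub
        (measurable_const.div (measurable_id.pow_const 4))).mul
        (Real.measurable_exp.comp (measurable_const.div measurable_id))
    · filter_upwards [ae_restrict_mem measurableSet_Ioi] with s hs
      have hs1 : (1:ℝ) < s := hs
      have hsp : (0:ℝ) < s := lt_trans one_pos hs1
      have hexple : Real.exp (-b / s) ≤ 1 := by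
        rw [Real.exp_le_one_iff, neg_div]
        exact neg_nonpos.mpr (by positivity)
      have hexppos := Real.exp_pos (-b / s)
      have hr3 : s ^ (-3 : ℝ) = (s^3)⁻¹ := by
        rw [show (-3 : ℝ) = -(3:ℕ) by norm_num, Real.rpow_neg hsp.le, Real.rpow_natCast]
      have hr4 : s ^ (-4 : ℝ) = (s^4)⁻¹ := by
        rw [show (-4 : ℝ) = -(4:ℕ) by norm_num, Real.rpow_neg hsp.le, Real.rpow_natCast]
      simp only [Pi.add_apply]
      rw [Real.norm_eq_abs, abs_mul, _root_.abs_of_nonneg hexppos.le, hr3, hr4]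
      calc |A / s^3 - A * b / s^4| * Real.exp (-b / s)
          ≤ (|A| / s^3 + |A| * b / s^4) * 1 := by
            apply mul_le_mul _ hexple hexppos.le (by positivity)
            refine le_trans (abs_sub _ _) ?_
            have e1 : |A / s^3| = |A| / s^3 := by
              rw [abs_div, _root_.abs_of_nonneg (by positivity : (0:ℝ) ≤ s^3)]
            have e2 : |A * b / s^4| = |A| * b / s^4 := by
              rw [abs_div, abs_mul, _root_.abs_of_nonneg hb.le,
                _root_.abs_of_nonneg (by positivity : (0:ℝ) ≤ s^4)]
            rw [e1, e2]
        _ = |A| * (s^3)⁻¹ + |A| * b * (s^4)⁻¹ := by ring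
  have htends : Tendsto Φ atTop (𝓝 (-A / b^2)) := by
    have hinv : Tendsto (fun s : ℝ => s⁻¹) atTop (𝓝 0) := tendsto_inv_atTop_zero
    have hinv2 : Tendsto (fun s : ℝ => (s^2)⁻¹) atTop (𝓝 0) :=
      (tendsto_pow_atTop (two_ne_zero)).inv_tendsto_atTop
    have hexp : Tendsto (fun s : ℝ => Real.exp ((-b) * s⁻¹)) atTop (𝓝 1) := by
      have h0 : Tendsto (fun s : ℝ => (-b) * s⁻¹) atTop (𝓝 0) := by
        simpa using hinv.const_mul (-b)
      simpa [Function.comp_def] using (Real.continuous_exp.tendsto 0).comp h0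
    have h := ((((hinv.const_mul (-b⁻¹)).sub hinv2).sub_const ((b^2)⁻¹)).mul hexp).const_mul A
    rw [hΦ]
    convert h using 2
    field_simp
    ring
  rw [MeasureTheory.integral_Ioi_of_hasDerivAt_of_tendsto'
    (f := Φ) (fun s hs => hderiv s hs) hfint htends]
  have hΦ1 : Φ 1 = A * (((-b⁻¹) - 1 - (b^2)⁻¹) * Real.exp (-b)) := by
    rw [hΦ]
    norm_num
  rw [hΦ1]
  field_simp
  ring

lemma phase_norm (w : ℝ) : ‖Complex.exp (-Complex.I * (w : ℝ))‖ = 1 := by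
  rw [Complex.norm_exp]
  simp [Complex.mul_re]

end FRB

open FRB Complex Filter
open scoped Real Topology

set_option maxHeartbeats 2000000 in
/-- Fourier transform of the residual `U - U^ε = (r²/(16π)) E₁(r²/ε²)` of the 2D biharmonic
kernel: `∫_{ℝ²} (‖y‖²/(16π)) E₁(‖y‖²/ε²) e^{-i k·y} dy
  = (-16 + e^{-κ²ε²/4}(16 + 4κ²ε² + κ⁴ε⁴))/(16κ⁴)`, `κ = ‖k‖ ≠ 0`. -/
theorem fourier_residual_biharmonic_2d
    (ε : ℝ) (hε : 0 < ε) (k : EuclideanSpace ℝ (Fin 2)) (hk : k ≠ 0) :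
    ∫ y : EuclideanSpace ℝ (Fin 2),
        ((‖y‖ ^ 2 / (16 * Real.pi) * E1 (‖y‖ ^ 2 / ε ^ 2) : ℝ) : ℂ) *
          Complex.exp (-Complex.I * (⟪k, y⟫ : ℝ)) =
      (((-16 + Real.exp (-(‖k‖ ^ 2 * ε ^ 2) / 4) *
          (16 + 4 * ‖k‖ ^ 2 * ε ^ 2 + ‖k‖ ^ 4 * ε ^ 4)) / (16 * ‖k‖ ^ 4) : ℝ) : ℂ) := by
  have hκ : 0 < ‖k‖ := norm_pos_iff.mpr hk
  have hε0 : ε ≠ 0 := hε.ne'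
  have hπ : (0:ℝ) < Real.pi := Real.pi_pos
  have hmeasphase : AEStronglyMeasurable
      (fun v : EuclideanSpace ℝ (Fin 2) => Complex.exp (-Complex.I * (⟪k, v⟫ : ℝ))) volume := by
    apply Continuous.aestronglyMeasurable
    exact Complex.continuous_exp.comp (continuous_const.mul
      (Complex.continuous_ofReal.comp (continuous_const.inner continuous_id)))
  -- Step 1 : rewrite the integrand via `E1_eq`
  have step1 : ∫ y : EuclideanSpace ℝ (Fin 2),
        ((‖y‖ ^ 2 / (16 * Real.pi) * E1 (‖y‖ ^ 2 / ε ^ 2) : ℝ) : ℂ) *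
          Complex.exp (-Complex.I * (⟪k, y⟫ : ℝ))
      = ∫ v : EuclideanSpace ℝ (Fin 2), ∫ s in Ioi (1:ℝ),
          ((‖v‖ ^ 2 / (16 * Real.pi) * (Real.exp (-(‖v‖ ^ 2 / ε ^ 2 * s)) / s) : ℝ) : ℂ) *
            Complex.exp (-Complex.I * (⟪k, v⟫ : ℝ)) := by
    refine integral_congr_ae ?_
    have hae : ∀ᵐ v : EuclideanSpace ℝ (Fin 2) ∂volume, v ≠ 0 := by
      refine ae_iff.2 ?_
      simp only [ne_eq, not_not, Set.setOf_eq_eq_singleton]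
      exact measure_singleton 0
    filter_upwards [hae] with v hv
    have hvn : 0 < ‖v‖ := norm_pos_iff.mpr hv
    have hr : 0 < ‖v‖ ^ 2 / ε ^ 2 := by positivity
    symm
    calc ∫ s in Ioi (1:ℝ),
          ((‖v‖ ^ 2 / (16 * Real.pi) * (Real.exp (-(‖v‖ ^ 2 / ε ^ 2 * s)) / s) : ℝ) : ℂ) *
            Complex.exp (-Complex.I * (⟪k, v⟫ : ℝ))
        = (∫ s in Ioi (1:ℝ),
            ((‖v‖ ^ 2 / (16 * Real.pi) * (Real.exp (-(‖v‖ ^ 2 / ε ^ 2 * s)) / s) : ℝ) : ℂ)) *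
            Complex.exp (-Complex.I * (⟪k, v⟫ : ℝ)) := by
          rw [MeasureTheory.integral_mul_const]
      _ = ((∫ s in Ioi (1:ℝ),
            ‖v‖ ^ 2 / (16 * Real.pi) * (Real.exp (-(‖v‖ ^ 2 / ε ^ 2 * s)) / s) : ℝ) : ℂ) *
            Complex.exp (-Complex.I * (⟪k, v⟫ : ℝ)) := by
          congr 1
          exact integral_ofReal
      _ = ((‖v‖ ^ 2 / (16 * Real.pi) *
            ∫ s in Ioi (1:ℝ), Real.exp (-(‖v‖ ^ 2 / ε ^ 2 * s)) / s : ℝ) : ℂ) *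
            Complex.exp (-Complex.I * (⟪k, v⟫ : ℝ)) := by
          rw [MeasureTheory.integral_const_mul]
      _ = ((‖v‖ ^ 2 / (16 * Real.pi) * E1 (‖v‖ ^ 2 / ε ^ 2) : ℝ) : ℂ) *
            Complex.exp (-Complex.I * (⟪k, v⟫ : ℝ)) := by
          rw [E1_eq hr]
  -- integrability on the product space
  have hprodmeas : AEStronglyMeasurable
      (Function.uncurry fun (v : EuclideanSpace ℝ (Fin 2)) (s : ℝ) =>
        ((‖v‖ ^ 2 / (16 * Real.pi) * (Real.exp (-(‖v‖ ^ 2 / ε ^ 2 * s)) / s) : ℝ) : ℂ) *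
          Complex.exp (-Complex.I * (⟪k, v⟫ : ℝ)))
      ((volume : Measure (EuclideanSpace ℝ (Fin 2))).prod (volume.restrict (Ioi 1))) := by
    apply Measurable.aestronglyMeasurable
    have hm1 : Measurable fun p : EuclideanSpace ℝ (Fin 2) × ℝ =>
        ‖p.1‖ ^ 2 / (16 * Real.pi) * (Real.exp (-(‖p.1‖ ^ 2 / ε ^ 2 * p.2)) / p.2) :=
      (((measurable_norm.comp measurable_fst).pow_const 2).div_const _).mul
        ((Real.measurable_exp.comp
          ((((measurable_norm.comp measurable_fst).pow_const 2).div_const _).mul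
            measurable_snd).neg).div measurable_snd)
    have hm2 : Measurable fun p : EuclideanSpace ℝ (Fin 2) × ℝ =>
        Complex.exp (-Complex.I * (⟪k, p.1⟫ : ℝ)) :=
      Complex.measurable_exp.comp (measurable_const.mul
        (Complex.measurable_ofReal.comp
          ((Continuous.inner continuous_const continuous_id).measurable.comp measurable_fst)))
    exact (Complex.measurable_ofReal.comp hm1).mul hm2
  have hint : Integrable
      (Function.uncurry fun (v : EuclideanSpace ℝ (Fin 2)) (s : ℝ) =>
        ((‖v‖ ^ 2 / (16 * Real.pi) * (Real.exp (-(‖v‖ ^ 2 / ε ^ 2 * s)) / s) : ℝ) : ℂ) *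
          Complex.exp (-Complex.I * (⟪k, v⟫ : ℝ)))
      ((volume : Measure (EuclideanSpace ℝ (Fin 2))).prod (volume.restrict (Ioi 1))) := by
    rw [MeasureTheory.integrable_prod_iff' hprodmeas]
    constructor
    · filter_upwards [ae_restrict_mem measurableSet_Ioi] with s hs
      have hs1 : (1:ℝ) < s := hs
      have hs0 : (0:ℝ) < s := lt_trans one_pos hs1
      have ha : 0 < s / ε ^ 2 := by positivity
      have hg : Integrable (fun v : EuclideanSpace ℝ (Fin 2) =>
          ((‖v‖ ^ 2 / (16 * Real.pi) * (Real.exp (-(‖v‖ ^ 2 / ε ^ 2 * s)) / s) : ℝ) : ℂ)) := by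
        refine (((integrable_norm2_gauss ha).const_mul
            (1 / (16 * Real.pi * s))).congr (Eventually.of_forall fun v => ?_)).ofReal
        show 1 / (16 * Real.pi * s) * (‖v‖ ^ 2 * Real.exp (-(s / ε ^ 2) * ‖v‖ ^ 2))
            = ‖v‖ ^ 2 / (16 * Real.pi) * (Real.exp (-(‖v‖ ^ 2 / ε ^ 2 * s)) / s)
        rw [show -(s / ε ^ 2) * ‖v‖ ^ 2 = -(‖v‖ ^ 2 / ε ^ 2 * s) by ring]
        field_simp
        all_goals ring
      have h2 := hg.bdd_mul hmeasphase (c := 1) (Eventually.of_forall fun v => le_of_eq (phase_norm _))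
      exact h2.congr (Eventually.of_forall fun v => mul_comm _ _)
    · have hptnorm : ∀ᵐ s ∂(volume.restrict (Ioi (1:ℝ))),
          (∫ v : EuclideanSpace ℝ (Fin 2),
            ‖((‖v‖ ^ 2 / (16 * Real.pi) * (Real.exp (-(‖v‖ ^ 2 / ε ^ 2 * s)) / s) : ℝ) : ℂ) *
              Complex.exp (-Complex.I * (⟪k, v⟫ : ℝ))‖) = ε ^ 4 / (16 * s ^ 3) := by
        filter_upwards [ae_restrict_mem measurableSet_Ioi] with s hs
        have hs1 : (1:ℝ) < s := hs
        have hs0 : (0:ℝ) < s := lt_trans one_pos hs1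
        have ha : 0 < s / ε ^ 2 := by positivity
        have hnorm : ∀ v : EuclideanSpace ℝ (Fin 2),
            ‖((‖v‖ ^ 2 / (16 * Real.pi) * (Real.exp (-(‖v‖ ^ 2 / ε ^ 2 * s)) / s) : ℝ) : ℂ) *
              Complex.exp (-Complex.I * (⟪k, v⟫ : ℝ))‖
            = 1 / (16 * Real.pi * s) * (‖v‖ ^ 2 * Real.exp (-(s / ε ^ 2) * ‖v‖ ^ 2)) := by
          intro v
          rw [norm_mul, phase_norm, mul_one, Complex.norm_real, Real.norm_eq_abs,
            _root_.abs_of_nonneg (mul_nonneg (by positivity)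
              (div_nonneg (Real.exp_pos _).le hs0.le))]
          rw [show -(s / ε ^ 2) * ‖v‖ ^ 2 = -(‖v‖ ^ 2 / ε ^ 2 * s) by ring]
          field_simp
          all_goals ring
        calc (∫ v : EuclideanSpace ℝ (Fin 2),
              ‖((‖v‖ ^ 2 / (16 * Real.pi) * (Real.exp (-(‖v‖ ^ 2 / ε ^ 2 * s)) / s) : ℝ) : ℂ) *
                Complex.exp (-Complex.I * (⟪k, v⟫ : ℝ))‖)
            = ∫ v : EuclideanSpace ℝ (Fin 2),
                1 / (16 * Real.pi * s) * (‖v‖ ^ 2 * Real.exp (-(s / ε ^ 2) * ‖v‖ ^ 2)) :=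
              integral_congr_ae (Eventually.of_forall hnorm)
          _ = 1 / (16 * Real.pi * s) *
                ∫ v : EuclideanSpace ℝ (Fin 2), ‖v‖ ^ 2 * Real.exp (-(s / ε ^ 2) * ‖v‖ ^ 2) := by
              rw [MeasureTheory.integral_const_mul]
          _ = 1 / (16 * Real.pi * s) * (Real.pi / (s / ε ^ 2) ^ 2) := by
              rw [gauss2_real ha]
          _ = ε ^ 4 / (16 * s ^ 3) := by
              field_simp
              all_goals ring
      have hbase : IntegrableOn (fun s : ℝ => ε ^ 4 / 16 * s ^ (-3 : ℝ)) (Ioi 1) :=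
        (integrableOn_Ioi_rpow_of_lt (by norm_num) one_pos).const_mul _
      refine Integrable.congr hbase ?_
      filter_upwards [hptnorm, ae_restrict_mem measurableSet_Ioi] with s h1 h2
      have hs0 : (0:ℝ) < s := lt_trans one_pos h2
      simp only [Function.uncurry_apply_pair]
      rw [h1, show (-3 : ℝ) = -(3:ℕ) by norm_num, Real.rpow_neg hs0.le, Real.rpow_natCast]
      field_simp
  have hswap := MeasureTheory.integral_integral_swap hint
  -- Step 3 : compute the inner integral
  have step3 : ∫ s in Ioi (1:ℝ), (∫ v : EuclideanSpace ℝ (Fin 2),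
        ((‖v‖ ^ 2 / (16 * Real.pi) * (Real.exp (-(‖v‖ ^ 2 / ε ^ 2 * s)) / s) : ℝ) : ℂ) *
          Complex.exp (-Complex.I * (⟪k, v⟫ : ℝ)))
      = ∫ s in Ioi (1:ℝ),
          (((ε^4/16 / s^3 - ε^4/16 * (‖k‖^2 * ε^2 / 4) / s^4) *
            Real.exp (-(‖k‖^2 * ε^2 / 4) / s) : ℝ) : ℂ) := by
    refine integral_congr_ae ?_
    filter_upwards [ae_restrict_mem measurableSet_Ioi] with s hs
    have hs1 : (1:ℝ) < s := hs
    have hs0 : (0:ℝ) < s := lt_trans one_pos hs1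
    have ha : 0 < s / ε ^ 2 := by positivity
    have hpt2 : ∀ v : EuclideanSpace ℝ (Fin 2),
        ((‖v‖ ^ 2 / (16 * Real.pi) * (Real.exp (-(‖v‖ ^ 2 / ε ^ 2 * s)) / s) : ℝ) : ℂ) *
          Complex.exp (-Complex.I * (⟪k, v⟫ : ℝ))
        = ((1 / (16 * Real.pi * s) : ℝ) : ℂ) *
            (((‖v‖ ^ 2 : ℝ) : ℂ) *
              cexp (-((s / ε ^ 2 : ℝ) : ℂ) * ‖v‖ ^ 2 + (-I) * ⟪k, v⟫)) := by
      intro v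
      have harg : -((s / ε ^ 2 : ℝ) : ℂ) * (‖v‖ : ℂ) ^ 2 + (-I) * ((⟪k, v⟫ : ℝ) : ℂ)
          = ((-(‖v‖ ^ 2 / ε ^ 2 * s) : ℝ) : ℂ) + (-I) * ((⟪k, v⟫ : ℝ) : ℂ) := by
        push_cast
        ring
      rw [harg, Complex.exp_add, ← Complex.ofReal_exp]
      push_cast
      ring
    calc ∫ v : EuclideanSpace ℝ (Fin 2),
          ((‖v‖ ^ 2 / (16 * Real.pi) * (Real.exp (-(‖v‖ ^ 2 / ε ^ 2 * s)) / s) : ℝ) : ℂ) *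
            Complex.exp (-Complex.I * (⟪k, v⟫ : ℝ))
        = ∫ v : EuclideanSpace ℝ (Fin 2), ((1 / (16 * Real.pi * s) : ℝ) : ℂ) *
            (((‖v‖ ^ 2 : ℝ) : ℂ) *
              cexp (-((s / ε ^ 2 : ℝ) : ℂ) * ‖v‖ ^ 2 + (-I) * ⟪k, v⟫)) :=
          integral_congr_ae (Eventually.of_forall hpt2)
      _ = ((1 / (16 * Real.pi * s) : ℝ) : ℂ) *
            ∫ v : EuclideanSpace ℝ (Fin 2), ((‖v‖ ^ 2 : ℝ) : ℂ) *
              cexp (-((s / ε ^ 2 : ℝ) : ℂ) * ‖v‖ ^ 2 + (-I) * ⟪k, v⟫) := by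
          rw [MeasureTheory.integral_const_mul]
      _ = ((1 / (16 * Real.pi * s) : ℝ) : ℂ) *
            (((Real.pi / (s / ε ^ 2) ^ 2 - Real.pi * ‖k‖ ^ 2 / (4 * (s / ε ^ 2) ^ 3)) *
              Real.exp (-‖k‖ ^ 2 / (4 * (s / ε ^ 2))) : ℝ) : ℂ) := by
          rw [gauss2 ha k]
      _ = (((ε^4/16 / s^3 - ε^4/16 * (‖k‖^2 * ε^2 / 4) / s^4) *
            Real.exp (-(‖k‖^2 * ε^2 / 4) / s) : ℝ) : ℂ) := by
          rw [← Complex.ofReal_mul]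
          congr 1
          have hargE : -‖k‖ ^ 2 / (4 * (s / ε ^ 2)) = -(‖k‖^2 * ε^2 / 4) / s := by
            field_simp
            all_goals ring
          rw [hargE]
          field_simp
          all_goals ring
  -- Step 4 : evaluate the remaining 1D integral
  have hb : 0 < ‖k‖ ^ 2 * ε ^ 2 / 4 := by positivity
  have step4 := integral_aux (A := ε ^ 4 / 16) hb
  rw [step1, hswap, step3]
  rw [show (∫ s in Ioi (1:ℝ),
        (((ε^4/16 / s^3 - ε^4/16 * (‖k‖^2 * ε^2 / 4) / s^4) *
          Real.exp (-(‖k‖^2 * ε^2 / 4) / s) : ℝ) : ℂ))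
      = ((∫ s in Ioi (1:ℝ), (ε^4/16 / s^3 - ε^4/16 * (‖k‖^2 * ε^2 / 4) / s^4) *
          Real.exp (-(‖k‖^2 * ε^2 / 4) / s) : ℝ) : ℂ) from integral_ofReal]
  rw [step4]
  congr 1
  rw [show -(‖k‖^2 * ε^2 / 4) = -(‖k‖^2 * ε^2) / 4 by ring]
  field_simp
  all_goals ring
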